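/- arXiv:0704.2327 — 4 statements merged into one kernel-verified Lean document; each statement's English description precedes it below -/
import Mathlib

section
/- The autonomous system df0/dt = {2(f1-f3)g1 - 2g2 f1 - α1 - α3} f0 + α0(f1-f3), df1/dt = {2(f0-f3)g2 - 2g1 f0 - α0 - α3} f1 + α1(f0-f3), df2/dt = {(f3-f1+3f0)g1 + (f3+3f1-f0)g2 + 1} f2 - 4 α2 g1 g2, df3/dt = -(2 f0 g1 + 2 f1 g2 + α0 + α1) f3 - α3(f0+f1), dg1/dt = (f0-f1+f3) g1² + {(f0-f1-f3) g2 + α0+α1+α3} g1 + f2(f3+3f1-f0), dg2/dt = (f1-f0+f3) g2² + {(f1-f0-f3) g1 + α0+α1+α3} g2 + f2(f3+3f0-f1) satisfies d(f3 - f0 - f1)/dt = 0; that is, f3 - (f0 + f1) is a first integral of the system. -/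
theorem rhs_f3_eq_rhs_f0_add_rhs_f1 {R : Type*} [CommRing R] (α0 α1 α3 f0 f1 f3 g1 g2 : R) :
    -(2*f0*g1 + 2*f1*g2 + α0 + α1)*f3 - α3*(f0 + f1) =
      ((2*(f1 - f3)*g1 - 2*g2*f1 - α1 - α3)*f0 + α0*(f1 - f3)) +
        ((2*(f0 - f3)*g2 - 2*g1*f0 - α0 - α3)*f1 + α1*(f0 - f3)) := by
  ring

theorem stmt_0_general (α0 α1 α3 : ℂ)
    (f0 f1 f3 g1 g2 : ℝ → ℂ)
    (hf0 : ∀ t, HasDerivAt f0 ((2*(f1 t - f3 t)*g1 t - 2*g2 t*f1 t - α1 - α3)*f0 t + α0*(f1 t - f3 t)) t)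
    (hf1 : ∀ t, HasDerivAt f1 ((2*(f0 t - f3 t)*g2 t - 2*g1 t*f0 t - α0 - α3)*f1 t + α1*(f0 t - f3 t)) t)
    (hf3 : ∀ t, HasDerivAt f3 (-(2*f0 t*g1 t + 2*f1 t*g2 t + α0 + α1)*f3 t - α3*(f0 t + f1 t)) t) :
    ∀ t, HasDerivAt (fun t => f3 t - (f0 t + f1 t)) 0 t := by
  intro t
  have h := (hf3 t).sub ((hf0 t).add (hf1 t))
  rwa [rhs_f3_eq_rhs_f0_add_rhs_f1, sub_self] at h

/-- First integral f3 - (f0 + f1) of the A5^(2) autonomous system. -/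
theorem stmt_0 (α0 α1 α2 α3 : ℂ) (hα : α0 + α1 + 2*α2 + α3 = 1/2)
    (f0 f1 f2 f3 g1 g2 : ℝ → ℂ)
    (hf0 : ∀ t, HasDerivAt f0 ((2*(f1 t - f3 t)*g1 t - 2*g2 t*f1 t - α1 - α3)*f0 t + α0*(f1 t - f3 t)) t)
    (hf1 : ∀ t, HasDerivAt f1 ((2*(f0 t - f3 t)*g2 t - 2*g1 t*f0 t - α0 - α3)*f1 t + α1*(f0 t - f3 t)) t)
    (hf2 : ∀ t, HasDerivAt f2 (((f3 t - f1 t + 3*f0 t)*g1 t + (f3 t + 3*f1 t - f0 t)*g2 t + 1)*f2 t - 4*α2*g1 t*g2 t) t)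
    (hf3 : ∀ t, HasDerivAt f3 (-(2*f0 t*g1 t + 2*f1 t*g2 t + α0 + α1)*f3 t - α3*(f0 t + f1 t)) t)
    (hg1 : ∀ t, HasDerivAt g1 ((f0 t - f1 t + f3 t)*(g1 t)^2 + ((f0 t - f1 t - f3 t)*g2 t + α0 + α1 + α3)*g1 t + f2 t*(f3 t + 3*f1 t - f0 t)) t)
    (hg2 : ∀ t, HasDerivAt g2 ((f1 t - f0 t + f3 t)*(g2 t)^2 + ((f1 t - f0 t - f3 t)*g1 t + α0 + α1 + α3)*g2 t + f2 t*(f3 t + 3*f0 t - f1 t)) t) :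
    ∀ t, HasDerivAt (fun t => f3 t - (f0 t + f1 t)) 0 t :=
  stmt_0_general α0 α1 α3 f0 f1 f3 g1 g2 hf0 hf1 hf3
end

section
/- For the autonomous system df0/dt = {2(f1-f3)g1 - 2g2 f1 - α1 - α3} f0 + α0(f1-f3), df1/dt = {2(f0-f3)g2 - 2g1 f0 - α0 - α3} f1 + α1(f0-f3), df2/dt = {(f3-f1+3f0)g1 + (f3+3f1-f0)g2 + 1} f2 - 4 α2 g1 g2, df3/dt = -(2 f0 g1 + 2 f1 g2 + α0 + α1) f3 - α3(f0+f1), dg1/dt = (f0-f1+f3) g1² + {(f0-f1-f3) g2 + α0+α1+α3} g1 + f2(f3+3f1-f0), dg2/dt = (f1-f0+f3) g2² + {(f1-f0-f3) g1 + α0+α1+α3} g2 + f2(f3+3f0-f1), the quantity f2 - g1 g2 satisfies d(f2 - g1 g2)/dt = f2 - g1 g2, provided α0 + α1 + 2α2 + α3 = 1/2. Consequently f2 - g1 g2 = C e^t for some constant C. -/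
theorem eq_exp_smul_of_hasDerivAt_self {E : Type*} [NormedAddCommGroup E] [NormedSpace ℝ E]
    {f : ℝ → E} (hf : ∀ t, HasDerivAt f (f t) t) (t : ℝ) : f t = Real.exp t • f 0 := by
  have hzero : ∀ s, HasDerivAt (fun s => Real.exp (-s) • f s) 0 s := fun s =>
    (((Real.hasDerivAt_exp (-s)).comp s (hasDerivAt_neg s)).smul (hf s)).congr_deriv (by simp)
  have hconst := is_const_of_deriv_eq_zero (fun s => (hzero s).differentiableAt)
    (fun s => (hzero s).deriv) t 0
  simp only [neg_zero, Real.exp_zero, one_smul] at hconst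
  rw [← hconst, smul_smul, ← Real.exp_add, add_neg_cancel, Real.exp_zero, one_smul]

theorem stmt_1_general (α0 α1 α2 α3 : ℂ) (hα : α0 + α1 + 2*α2 + α3 = 1/2)
    (f0 f1 f2 f3 g1 g2 : ℝ → ℂ)
    (hf2 : ∀ t, HasDerivAt f2 (((f3 t - f1 t + 3*f0 t)*g1 t + (f3 t + 3*f1 t - f0 t)*g2 t + 1)*f2 t - 4*α2*g1 t*g2 t) t)
    (hg1 : ∀ t, HasDerivAt g1 ((f0 t - f1 t + f3 t)*(g1 t)^2 + ((f0 t - f1 t - f3 t)*g2 t + α0 + α1 + α3)*g1 t + f2 t*(f3 t + 3*f1 t - f0 t)) t)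
    (hg2 : ∀ t, HasDerivAt g2 ((f1 t - f0 t + f3 t)*(g2 t)^2 + ((f1 t - f0 t - f3 t)*g1 t + α0 + α1 + α3)*g2 t + f2 t*(f3 t + 3*f0 t - f1 t)) t) :
    (∀ t, HasDerivAt (fun t => f2 t - g1 t * g2 t) (f2 t - g1 t * g2 t) t) ∧
    ∃ C : ℂ, ∀ t, f2 t - g1 t * g2 t = C * Complex.exp t := by
  -- The cubic terms cancel, and the `g1 g2` terms add up to `-2 (α0 + α1 + 2α2 + α3) g1 g2 = -g1 g2`.
  have hderiv : ∀ t, HasDerivAt (fun t => f2 t - g1 t * g2 t) (f2 t - g1 t * g2 t) t := fun t =>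
    ((hf2 t).sub ((hg1 t).mul (hg2 t))).congr_deriv
      (by linear_combination (-(2 * g1 t * g2 t)) * hα)
  refine ⟨hderiv, f2 0 - g1 0 * g2 0, fun t => ?_⟩
  rw [eq_exp_smul_of_hasDerivAt_self hderiv t, Complex.real_smul, Complex.ofReal_exp, mul_comm]

/-- First integral f3 - (f0 + f1) of the A5^(2) autonomous system. -/
theorem stmt_1 (α0 α1 α2 α3 : ℂ) (hα : α0 + α1 + 2*α2 + α3 = 1/2)
    (f0 f1 f2 f3 g1 g2 : ℝ → ℂ)
    (hf0 : ∀ t, HasDerivAt f0 ((2*(f1 t - f3 t)*g1 t - 2*g2 t*f1 t - α1 - α3)*f0 t + α0*(f1 t - f3 t)) t)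
    (hf1 : ∀ t, HasDerivAt f1 ((2*(f0 t - f3 t)*g2 t - 2*g1 t*f0 t - α0 - α3)*f1 t + α1*(f0 t - f3 t)) t)
    (hf2 : ∀ t, HasDerivAt f2 (((f3 t - f1 t + 3*f0 t)*g1 t + (f3 t + 3*f1 t - f0 t)*g2 t + 1)*f2 t - 4*α2*g1 t*g2 t) t)
    (hf3 : ∀ t, HasDerivAt f3 (-(2*f0 t*g1 t + 2*f1 t*g2 t + α0 + α1)*f3 t - α3*(f0 t + f1 t)) t)
    (hg1 : ∀ t, HasDerivAt g1 ((f0 t - f1 t + f3 t)*(g1 t)^2 + ((f0 t - f1 t - f3 t)*g2 t + α0 + α1 + α3)*g1 t + f2 t*(f3 t + 3*f1 t - f0 t)) t)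
    (hg2 : ∀ t, HasDerivAt g2 ((f1 t - f0 t + f3 t)*(g2 t)^2 + ((f1 t - f0 t - f3 t)*g1 t + α0 + α1 + α3)*g2 t + f2 t*(f3 t + 3*f0 t - f1 t)) t) :
    (∀ t, HasDerivAt (fun t => f2 t - g1 t * g2 t) (f2 t - g1 t * g2 t) t) ∧
    ∃ C : ℂ, ∀ t, f2 t - g1 t * g2 t = C * Complex.exp t :=
  stmt_1_general α0 α1 α2 α3 hα f0 f1 f2 f3 g1 g2 hf2 hg1 hg2
end

section
/- The transformations s0 and s2 of the A5^(2) system satisfy the braid relation (s0 s2)³ = id, where s0 : (q1,p1,q2,p2;α) ↦ (q1+α0/p1, p1, q2, p2; -α0, α1, α2+α0, α3) and s2 : (q1,p1,q2,p2;α) ↦ (q1, p1 - α2 q2/(q1 q2+T), q2, p2 - α2 q1/(q1 q2+T); α0+α2, α1+α2, -α2, α3+2α2). -/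
/-- State space: variables (q1,p1,q2,p2) and parameters (α0,α1,α2,α3). -/
abbrev S := ℂ × ℂ × ℂ × ℂ × ℂ × ℂ × ℂ × ℂ

/-- Bäcklund transformation s0. -/
noncomputable def s0 : S → S :=
  fun (q1, p1, q2, p2, a0, a1, a2, a3) =>
    (q1 + a0/p1, p1, q2, p2, -a0, a1, a2 + a0, a3)

/-- Bäcklund transformation s1. -/
noncomputable def s1 : S → S :=
  fun (q1, p1, q2, p2, a0, a1, a2, a3) =>
    (q1, p1, q2 + a1/p2, p2, a0, -a1, a2 + a1, a3)

/-- Bäcklund transformation s2 (T a fixed constant). -/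
noncomputable def s2 (T : ℂ) : S → S :=
  fun (q1, p1, q2, p2, a0, a1, a2, a3) =>
    (q1, p1 - a2*q2/(q1*q2 + T), q2, p2 - a2*q1/(q1*q2 + T),
      a0 + a2, a1 + a2, -a2, a3 + 2*a2)

/-- Bäcklund transformation s3. -/
noncomputable def s3 : S → S :=
  fun (q1, p1, q2, p2, a0, a1, a2, a3) =>
    (q1 + a3/(p1 + p2 - 1), p1, q2 + a3/(p1 + p2 - 1), p2,
      a0, a1, a2 + a3, -a3)

/-- Diagram automorphism π. -/
def pitr : S → S :=
  fun (q1, p1, q2, p2, a0, a1, a2, a3) =>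
    (q2, p2, q1, p1, a1, a0, a2, a3)

/-- s0 is defined at x (denominator p1 is nonzero). -/
def okS0 (x : S) : Prop := x.2.1 ≠ 0

/-- s1 is defined at x (denominator p2 is nonzero). -/
def okS1 (x : S) : Prop := x.2.2.2.1 ≠ 0

/-- s2 is defined at x (denominator q1*q2 + T is nonzero). -/
def okS2 (T : ℂ) (x : S) : Prop := x.1 * x.2.2.1 + T ≠ 0

/-- s3 is defined at x (denominator p1 + p2 - 1 is nonzero). -/
def okS3 (x : S) : Prop := x.2.1 + x.2.2.2.1 ≠ 1

/-! Both `s0` and `s2 T` are involutions, so `(s0 s2)³ = id` amounts to the braid relation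
`s2 s0 s2 = s0 s2 s0`. Writing `D = q1 q2 + T`, every denominator on either side is a product of
`D`, `p1`, `A = p1 D - α2 q2` and `B = p1 D + α0 q2`, and the two sides agree as rational
functions. Applying the braid relation at `w = s2 s0 s2 x` collapses the six-fold composite. -/

theorem s0_involutive : Function.Involutive s0 := by
  rintro ⟨q1, p1, q2, p2, a0, a1, a2, a3⟩
  simp [s0, neg_div]

theorem s2_involutive (T : ℂ) : Function.Involutive (s2 T) := by
  rintro ⟨q1, p1, q2, p2, a0, a1, a2, a3⟩
  simp only [s2, Prod.mk.injEq]
  refine ⟨trivial, ?_, trivial, ?_, ?_, ?_, ?_, ?_⟩ <;> ring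

theorem okS0_s0 {x : S} : okS0 (s0 x) ↔ okS0 x := Iff.rfl

theorem okS2_s2 {T : ℂ} {x : S} : okS2 T (s2 T x) ↔ okS2 T x := Iff.rfl

theorem s2_s0_s2 {T : ℂ} {x : S} (h0 : okS0 x) (h2 : okS2 T x) (h02 : okS0 (s2 T x))
    (h20 : okS2 T (s0 x)) : s2 T (s0 (s2 T x)) = s0 (s2 T (s0 x)) := by
  obtain ⟨q1, p1, q2, p2, a0, a1, a2, a3⟩ := x
  -- `field_simp` recognises a denominator as nonzero only when it matches a hypothesis
  -- syntactically, so `D`, and below `A` and `B`, are turned into atoms.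
  obtain ⟨D, rfl⟩ : ∃ D, T = D - q1 * q2 := ⟨q1 * q2 + T, by ring⟩
  simp only [okS0, okS2, s0, s2, add_sub_cancel] at *
  have hp1_s2 : p1 - a2 * q2 / D = (p1 * D - a2 * q2) / D := by field_simp
  have hden_s0 : (q1 + a0 / p1) * q2 + (D - q1 * q2) = (p1 * D + a0 * q2) / p1 := by
    field_simp; ring
  rw [hp1_s2] at h02 ⊢
  rw [hden_s0] at h20 ⊢
  have hA : p1 * D - a2 * q2 ≠ 0 := by simpa [h2] using h02
  have hB : p1 * D + a0 * q2 ≠ 0 := by simpa [h0] using h20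
  have hden_s0_s2 : (q1 + (a0 + a2) / ((p1 * D - a2 * q2) / D)) * q2 + (D - q1 * q2)
      = D * (p1 * D + a0 * q2) / (p1 * D - a2 * q2) := by
    field_simp; ring
  have hp1_s2_s0 : p1 - (a2 + a0) * q2 / ((p1 * D + a0 * q2) / p1)
      = p1 * (p1 * D - a2 * q2) / (p1 * D + a0 * q2) := by
    field_simp; ring
  rw [hden_s0_s2, hp1_s2_s0]
  generalize hAdef : p1 * D - a2 * q2 = A at *
  generalize hBdef : p1 * D + a0 * q2 = B at *
  simp only [Prod.mk.injEq]
  refine ⟨?_, ?_, trivial, ?_, by ring, by ring, by ring, by ring⟩ <;>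
  · field_simp
    subst hAdef hBdef
    ring

theorem stmt_8_general (T : ℂ) (x : S)
    (h2 : okS0 (s2 T x)) (h3 : okS2 T (s0 (s2 T x)))
    (h4 : okS0 (s2 T (s0 (s2 T x)))) (h5 : okS2 T (s0 (s2 T (s0 (s2 T x))))) :
    s0 (s2 T (s0 (s2 T (s0 (s2 T x))))) = x := by
  have hw : s2 T (s2 T (s0 (s2 T x))) = s0 (s2 T x) := s2_involutive T _
  have braid := s2_s0_s2 h4 (okS2_s2.mpr h3) (by rwa [hw, okS0_s0]) h5
  rw [← braid, hw, s0_involutive, s2_involutive]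

/-- The braid relation (s0 s2)³ = id, wherever all intermediate expressions are defined. -/
theorem stmt_8 (T : ℂ) (hT : T ≠ 0) (x : S)
    (h1 : okS2 T x) (h2 : okS0 (s2 T x)) (h3 : okS2 T (s0 (s2 T x)))
    (h4 : okS0 (s2 T (s0 (s2 T x)))) (h5 : okS2 T (s0 (s2 T (s0 (s2 T x)))))
    (h6 : okS0 (s2 T (s0 (s2 T (s0 (s2 T x)))))) :
    s0 (s2 T (s0 (s2 T (s0 (s2 T x))))) = x :=
  stmt_8_general T x h2 h3 h4 h5
end

section
/- Along solutions of the Hamiltonian system dq1/dT = [2q1²p1 - q1² + (α0+α1+α3)q1]/T - 1 + 4p2 + 2q1q2p2/T, dp1/dT = [-2q1p1² + 2q1p1 - (α0+α1+α3)p1 + α0]/T - 2p1q2p2/T, dq2/dT = [2q2²p2 - q2² + (α0+α1+α3)q2]/T - 1 + 4p1 + 2q1p1q2/T, dp2/dT = [-2q2p2² + 2q2p2 - (α0+α1+α3)p2 + α1]/T - 2q1p1p2/T, the quantity p1 + p2 satisfies d(p1+p2)/dT = [-2q1p1² + 2q1p1 - 2q2p2² + 2q2p2 - (α0+α1+α3)(p1+p2)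 + α0 + α1 - 2p1q2p2 - 2q1p1p2]/T; in particular, d(p1+p2-1)/dT vanishes on {p1+p2=1} (i.e., the vector field is tangent to the hypersurface p1 + p2 = 1) exactly when α3 = 0. -/
/-- Along solutions of the coupled Painlevé III system, p1 + p2 satisfies the stated
derivative formula; moreover the vector field is tangent to {p1 + p2 = 1}
exactly when α3 = 0. -/
theorem stmt_17 (α0 α1 α3 : ℂ) :
    ((∀ (q1 p1 q2 p2 : ℝ → ℂ),
      (∀ T : ℝ, T ≠ 0 → HasDerivAt p1
        ((-2*q1 T*(p1 T)^2 + 2*q1 T*p1 T - (α0+α1+α3)*p1 T + α0)/(T:ℂ)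
          - 2*p1 T*q2 T*p2 T/(T:ℂ)) T) →
      (∀ T : ℝ, T ≠ 0 → HasDerivAt p2
        ((-2*q2 T*(p2 T)^2 + 2*q2 T*p2 T - (α0+α1+α3)*p2 T + α1)/(T:ℂ)
          - 2*q1 T*p1 T*p2 T/(T:ℂ)) T) →
      ∀ T : ℝ, T ≠ 0 → HasDerivAt (fun t => p1 t + p2 t)
        ((-2*q1 T*(p1 T)^2 + 2*q1 T*p1 T - 2*q2 T*(p2 T)^2 + 2*q2 T*p2 T
          - (α0+α1+α3)*(p1 T + p2 T) + α0 + α1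
          - 2*p1 T*q2 T*p2 T - 2*q1 T*p1 T*p2 T)/(T:ℂ)) T))
    ∧
    ((∀ (q1 p1 q2 p2 T : ℂ), T ≠ 0 → p1 + p2 = 1 →
        ((-2*q1*p1^2 + 2*q1*p1 - (α0+α1+α3)*p1 + α0)/T - 2*p1*q2*p2/T)
        + ((-2*q2*p2^2 + 2*q2*p2 - (α0+α1+α3)*p2 + α1)/T - 2*q1*p1*p2/T) = 0)
      ↔ α3 = 0) := by
  constructor
  · intro q1 p1 q2 p2 h1 h2 T hT
    have := (h1 T hT).add (h2 T hT)
    convert this using 1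
    · rfl
    · rfl
    have hT' : (T : ℂ) ≠ 0 := by exact_mod_cast hT
    field_simp
    ring
  · constructor
    · intro h
      have := h 0 1 0 0 1 one_ne_zero (by ring)
      simp at this
      linear_combination -this
    · intro h q1 p1 q2 p2 T hT hp
      subst h
      have hp2 : p2 = 1 - p1 := by linear_combination hp
      subst hp2
      field_simp
      ring
end
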